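/- If a finite simple graph Γ satisfies A(Γ;x) = A(C_t;x) for some t ≥ 3, then Γ is isomorphic to the cycle graph C_t. -/

import Mathlib

open Finset Polynomial
open scoped Classical

noncomputable section

variable {V : Type*} [Fintype V]

/-- Number of neighbors of `v` inside `S` (as an integer). -/
def degIn (G : SimpleGraph V) (S : Finset V) (v : V) : ℤ :=
  ((S.filter (fun u => G.Adj v u)).card : ℤ)

/-- Number of neighbors of `v` outside `S` (as an integer). -/
def degOut (G : SimpleGraph V) (S : Finset V) (v : V) : ℤ :=
  ((Sᶜ.filter (fun u => G.Adj v u)).card : ℤ)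

/-- The exact index of alliance of `S`. -/
def exactIndex (G : SimpleGraph V) (S : Finset V) : ℤ :=
  if h : S.Nonempty then S.inf' h (fun v => degIn G S v - degOut G S v) else 0

/-- Nonempty vertex subsets inducing a connected subgraph. -/
def goodSets (G : SimpleGraph V) : Finset (Finset V) :=
  Finset.univ.filter (fun S => S.Nonempty ∧ (G.induce (S : Set V)).Connected)

/-- The alliance polynomial. -/
def alliancePoly (G : SimpleGraph V) : Polynomial ℤ :=
  ∑ S ∈ goodSets G, X ^ (((Fintype.card V : ℤ) + exactIndex G S).toNat)

/-- `A_k(Γ)`: number of connected exact defensive `k`-alliances. -/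
def allianceCount (G : SimpleGraph V) (k : ℤ) : ℕ :=
  ((goodSets G).filter (fun S => exactIndex G S = k)).card

end

/-!
The alliance polynomial of `C_t` is `t x^(t-2) + a x^t + x^(t+2)`. In any graph the index of a
connected set is at least `-Δ`, with equality exactly for the singletons of vertices of maximal
degree `Δ`. Comparing lowest terms therefore gives `|V| = t + Δ - 2` and exactly `t` vertices of
degree `Δ` (so `Δ ≥ 2`); comparing supports, every connected set has index in
`{-Δ, 2 - Δ, 4 - Δ}`, and exactly one has index `4 - Δ`. A connected component has index equal
to the least degree in it: this rules out `Δ ≥ 4` (a component with an isolated vertex and a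
vertex of degree `4`) and `Δ = 3` (the component of the unique leaf and the rest of the graph
would both have index `1`). For `Δ = 2` all vertices have degree `2` and every component has
index `2`, so there is only one: the graph is connected and `2`-regular on `t` vertices, i.e. a
cycle.
-/

namespace SimpleGraph

variable {V W : Type*} {G : SimpleGraph V} {H : SimpleGraph W}

theorem Reachable.mem_of_adj_mem {s : Set V} (hs : ∀ ⦃v w⦄, v ∈ s → G.Adj v w → w ∈ s)
    {u v : V} (huv : G.Reachable u v) (hu : u ∈ s) : v ∈ s := by
  rw [reachable_iff_reflTransGen] at huv
  induction huv with
  | refl => exact hu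
  | tail _ hadj ih => exact hs ih hadj

section Copy

variable [Fintype V] [Fintype W] [DecidableRel G.Adj] [DecidableRel H.Adj]

theorem Copy.neighborFinset_eq_map (f : Copy H G) {a : W} (ha : G.degree (f a) ≤ H.degree a) :
    G.neighborFinset (f a) = (H.neighborFinset a).map f.toEmbedding := by
  refine (Finset.eq_of_subset_of_card_le (fun x hx => ?_) (by simpa using ha)).symm
  obtain ⟨b, hb, rfl⟩ := Finset.mem_map.1 hx
  exact (G.mem_neighborFinset _ _).2 (f.toHom.map_adj ((H.mem_neighborFinset a b).1 hb))

theorem Copy.nonempty_iso_of_degree_le [Nonempty W] (f : Copy H G) (hG : G.Preconnected)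
    (hdeg : ∀ a, G.degree (f a) ≤ H.degree a) : Nonempty (H ≃g G) := by
  have hnbr (a : W) := f.neighborFinset_eq_map (hdeg a)
  have hsurj : Function.Surjective f := by
    intro v
    obtain ⟨a⟩ := ‹Nonempty W›
    refine (hG (f a) v).mem_of_adj_mem (s := Set.range f) ?_ ⟨a, rfl⟩
    rintro _ w ⟨b, rfl⟩ hbw
    rw [← mem_neighborFinset, hnbr] at hbw
    obtain ⟨c, -, rfl⟩ := Finset.mem_map.1 hbw
    exact ⟨c, rfl⟩
  refine ⟨⟨Equiv.ofBijective f ⟨f.injective, hsurj⟩, fun {a b} => ?_⟩⟩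
  change G.Adj (f a) (f.toEmbedding b) ↔ _
  rw [← mem_neighborFinset, hnbr, Finset.mem_map', mem_neighborFinset]

end Copy

theorem nonempty_iso_cycleGraph_of_isRegularOfDegree_two [Fintype V] [DecidableRel G.Adj]
    (hG : G.Connected) (h2 : G.IsRegularOfDegree 2) :
    Nonempty (G ≃g cycleGraph (Fintype.card V)) := by
  obtain ⟨v⟩ := hG.nonempty
  obtain ⟨w, hvw⟩ := (G.degree_pos_iff_exists_adj v).1 (by rw [h2.degree_eq]; norm_num)
  have : Nontrivial V := ⟨⟨v, w, hvw.ne⟩⟩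
  have hcyclic : ¬G.IsAcyclic := fun hac => by
    obtain ⟨u, hu⟩ := (IsTree.mk hG hac).exists_vert_degree_one_of_nontrivial
    rw [h2.degree_eq] at hu
    exact absurd hu (by norm_num)
  obtain ⟨n, hn, ⟨f⟩⟩ : ∃ n ≥ 3, cycleGraph n ⊑ G := by
    simpa [isAcyclic_iff_free_cycleGraph] using hcyclic
  obtain ⟨k, rfl⟩ : ∃ k, n = k + 3 := ⟨n - 3, by omega⟩
  obtain ⟨e⟩ := f.nonempty_iso_of_degree_le hG.preconnected
    (fun a => by rw [h2.degree_eq, cycleGraph_degree_three_le])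
  rw [← Fintype.card_congr e.toEquiv, Fintype.card_fin]
  exact ⟨e.symm⟩

end SimpleGraph

open SimpleGraph

section Alliance

variable {V : Type*} {G : SimpleGraph V} {S : Finset V} {v : V} {k : ℤ}

lemma degIn_nonneg : 0 ≤ degIn G S v := Int.natCast_nonneg _

variable [Fintype V]

lemma degOut_nonneg : 0 ≤ degOut G S v := Int.natCast_nonneg _

lemma degOut_eq_zero_iff : degOut G S v = 0 ↔ ∀ w, G.Adj v w → w ∈ S := by
  simp only [degOut, Int.natCast_eq_zero, Finset.card_eq_zero, Finset.filter_eq_empty_iff,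
    Finset.mem_compl]
  exact ⟨fun h w hw => by_contra fun hn => h hn hw, fun h w hw hvw => hw (h w hvw)⟩

lemma exactIndex_le (hv : v ∈ S) : exactIndex G S ≤ degIn G S v - degOut G S v := by
  rw [exactIndex, dif_pos ⟨v, hv⟩]
  exact Finset.inf'_le _ hv

lemma exists_exactIndex_eq (hS : S.Nonempty) :
    ∃ v ∈ S, exactIndex G S = degIn G S v - degOut G S v := by
  rw [exactIndex, dif_pos hS]
  exact Finset.exists_mem_eq_inf' hS _

lemma mem_goodSets : S ∈ goodSets G ↔ S.Nonempty ∧ (G.induce (S : Set V)).Connected := by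
  simp [goodSets]

lemma singleton_mem_goodSets (v : V) : {v} ∈ goodSets G := by
  refine mem_goodSets.2 ⟨Finset.singleton_nonempty v, ?_⟩
  rw [Finset.coe_singleton, induce_singleton_eq_top]
  exact connected_top

lemma univ_mem_goodSets (hG : G.Connected) : Finset.univ ∈ goodSets G := by
  have : Nonempty V := hG.nonempty
  rw [mem_goodSets, Finset.coe_univ]
  exact ⟨Finset.univ_nonempty, (induceUnivIso G).connected_iff.2 hG⟩

lemma SimpleGraph.ConnectedComponent.supp_toFinset_mem_goodSets (C : G.ConnectedComponent)
    [Fintype C.supp] : C.supp.toFinset ∈ goodSets G := by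
  rw [mem_goodSets, Set.coe_toFinset]
  exact ⟨by simpa using C.nonempty_supp, C.maximal_connected_induce_supp.1⟩

lemma eq_singleton_of_degIn_eq_zero (hS : S ∈ goodSets G) (hv : v ∈ S)
    (h : degIn G S v = 0) : S = {v} := by
  refine Finset.eq_singleton_iff_unique_mem.2 ⟨hv, fun w hw => ?_⟩
  by_contra hwv
  obtain ⟨p⟩ := (mem_goodSets.1 hS).2.preconnected ⟨v, hv⟩ ⟨w, hw⟩
  have hp : ¬p.Nil := Walk.not_nil_of_ne (by simpa using Ne.symm hwv)
  have hmem : (p.snd : V) ∈ S.filter (G.Adj v) := by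
    simpa using And.intro (p.snd.2 : (p.snd : V) ∈ (S : Set V)) (p.adj_snd hp)
  rw [degIn] at h
  exact Finset.notMem_empty _ (Finset.card_eq_zero.1 (by exact_mod_cast h) ▸ hmem)

lemma allianceCount_pos (hS : S ∈ goodSets G) : 0 < allianceCount G (exactIndex G S) :=
  Finset.card_pos.2 ⟨S, Finset.mem_filter.2 ⟨hS, rfl⟩⟩

lemma eq_of_allianceCount_le_one {T : Finset V} (h : allianceCount G k ≤ 1)
    (hS : S ∈ goodSets G) (hT : T ∈ goodSets G) (hSk : exactIndex G S = k)
    (hTk : exactIndex G T = k) : S = T :=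
  Finset.card_le_one.1 h _ (Finset.mem_filter.2 ⟨hS, hSk⟩) _ (Finset.mem_filter.2 ⟨hT, hTk⟩)

lemma preconnected_of_allianceCount_le_one [∀ C : G.ConnectedComponent, Fintype C.supp]
    (h : allianceCount G k ≤ 1)
    (hC : ∀ C : G.ConnectedComponent, exactIndex G C.supp.toFinset = k) : G.Preconnected := by
  intro u v
  have := eq_of_allianceCount_le_one h (G.connectedComponentMk u).supp_toFinset_mem_goodSets
    (G.connectedComponentMk v).supp_toFinset_mem_goodSets (hC _) (hC _)
  rwa [Set.toFinset_inj, ConnectedComponent.supp_inj, ConnectedComponent.eq] at this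

variable [DecidableRel G.Adj]

lemma degIn_add_degOut (S : Finset V) (v : V) :
    degIn G S v + degOut G S v = G.degree v := by
  rw [degIn, degOut, ← card_neighborFinset_eq_degree,
    ← Finset.card_inter_add_card_sdiff (G.neighborFinset v) S, Nat.cast_add]
  congr 3 <;> ext <;> simp [and_comm]

lemma exactIndex_singleton (v : V) : exactIndex G {v} = -G.degree v := by
  have hin : degIn G {v} v = 0 := by simp [degIn]
  have := degIn_add_degOut {v} v (G := G)
  rw [exactIndex, dif_pos (Finset.singleton_nonempty v), Finset.inf'_singleton]
  omega

lemma neg_maxDegree_le_exactIndex (hS : S.Nonempty) : -(G.maxDegree : ℤ) ≤ exactIndex G S := by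
  obtain ⟨v, -, hv⟩ := exists_exactIndex_eq hS (G := G)
  have := degIn_add_degOut S v (G := G)
  have : (G.degree v : ℤ) ≤ G.maxDegree := by exact_mod_cast G.degree_le_maxDegree v
  have := degIn_nonneg (G := G) (S := S) (v := v)
  omega

lemma exactIndex_eq_neg_maxDegree_iff (hS : S ∈ goodSets G) :
    exactIndex G S = -G.maxDegree ↔ ∃ v, G.degree v = G.maxDegree ∧ S = {v} := by
  constructor
  · intro h
    obtain ⟨v, hv, hev⟩ := exists_exactIndex_eq (mem_goodSets.1 hS).1 (G := G)
    have := degIn_add_degOut S v (G := G)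
    have : (G.degree v : ℤ) ≤ G.maxDegree := by exact_mod_cast G.degree_le_maxDegree v
    have := degIn_nonneg (G := G) (S := S) (v := v)
    have := degOut_nonneg (G := G) (S := S) (v := v)
    exact ⟨v, by omega, eq_singleton_of_degIn_eq_zero hS hv (by omega)⟩
  · rintro ⟨v, hv, rfl⟩
    rw [exactIndex_singleton, hv]

lemma allianceCount_eq_zero_of_lt (hk : k < -G.maxDegree) : allianceCount G k = 0 :=
  Finset.card_eq_zero.2 <| Finset.filter_eq_empty_iff.2 fun _ hS hSk =>
    (neg_maxDegree_le_exactIndex (mem_goodSets.1 hS).1).not_gt (hSk ▸ hk)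

lemma allianceCount_neg_maxDegree :
    allianceCount G (-G.maxDegree) = (Finset.univ.filter (G.degree · = G.maxDegree)).card := by
  have : (goodSets G).filter (exactIndex G · = -G.maxDegree) =
      (Finset.univ.filter (G.degree · = G.maxDegree)).image ({·}) := by
    ext S
    simp only [Finset.mem_filter, Finset.mem_image, Finset.mem_univ, true_and]
    constructor
    · rintro ⟨hS, h⟩
      obtain ⟨v, hv, rfl⟩ := (exactIndex_eq_neg_maxDegree_iff hS).1 h
      exact ⟨v, hv, rfl⟩
    · rintro ⟨v, hv, rfl⟩
      exact ⟨singleton_mem_goodSets v, (exactIndex_eq_neg_maxDegree_iff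
        (singleton_mem_goodSets v)).2 ⟨v, hv, rfl⟩⟩
  rw [allianceCount, this, Finset.card_image_of_injective _ Finset.singleton_injective]

lemma exists_exactIndex_eq_degree (hS : S.Nonempty)
    (hout : ∀ v ∈ S, ∀ w, G.Adj v w → w ∈ S) :
    ∃ w ∈ S, exactIndex G S = G.degree w := by
  obtain ⟨w, hw, hex⟩ := exists_exactIndex_eq hS (G := G)
  have := degOut_eq_zero_iff.2 (hout w hw)
  have := degIn_add_degOut S w (G := G)
  exact ⟨w, hw, by omega⟩

lemma SimpleGraph.ConnectedComponent.exists_exactIndex_supp_eq_degree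
    (C : G.ConnectedComponent) [Fintype C.supp] :
    ∃ w ∈ C.supp, exactIndex G C.supp.toFinset = G.degree w := by
  simpa using exists_exactIndex_eq_degree (S := C.supp.toFinset)
    (Set.toFinset_nonempty.2 C.nonempty_supp) fun v hv w hvw =>
      Set.mem_toFinset.2 (C.mem_supp_of_adj_mem_supp (Set.mem_toFinset.1 hv) hvw)

lemma eq_univ_of_maxDegree_le_exactIndex (hG : G.Preconnected) (hS : S.Nonempty)
    (h : (G.maxDegree : ℤ) ≤ exactIndex G S) : S = Finset.univ := by
  obtain ⟨u, hu⟩ := hS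
  refine Finset.eq_univ_of_forall fun v => (hG u v).mem_of_adj_mem (s := S) ?_ hu
  intro x y hx hxy
  have := exactIndex_le hx (G := G)
  have := degIn_add_degOut S x (G := G)
  have : (G.degree x : ℤ) ≤ G.maxDegree := by exact_mod_cast G.degree_le_maxDegree x
  have := degIn_nonneg (G := G) (S := S) (v := x)
  have := degOut_nonneg (G := G) (S := S) (v := x)
  exact degOut_eq_zero_iff.1 (by omega) y hxy

lemma exactIndex_cases_of_isRegularOfDegree_two (h : G.IsRegularOfDegree 2) (hS : S.Nonempty) :
    exactIndex G S = -2 ∨ exactIndex G S = 0 ∨ exactIndex G S = 2 := by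
  obtain ⟨v, -, hv⟩ := exists_exactIndex_eq hS (G := G)
  have := degIn_add_degOut S v (G := G)
  have := degIn_nonneg (G := G) (S := S) (v := v)
  have := degOut_nonneg (G := G) (S := S) (v := v)
  rw [h.degree_eq] at *
  omega

lemma univ_erase_mem_goodSets {u : V} (hG : G.Preconnected) (hu : G.degree u = 1)
    (hne : (Finset.univ.erase u).Nonempty) : Finset.univ.erase u ∈ goodSets G := by
  refine mem_goodSets.2 ⟨hne, ?_⟩
  obtain ⟨w, hw⟩ := hne
  have : Nonempty ((Finset.univ.erase u : Finset V) : Set V) := ⟨⟨w, Finset.mem_coe.2 hw⟩⟩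
  refine ⟨hG.induce_of_degree_eq_one fun v hv => ?_⟩
  obtain rfl : v = u := by simpa using hv
  obtain ⟨w, -, hw⟩ := degree_eq_one_iff_existsUnique_adj.1 hu
  exact fun x hx y hy => (hw x hx).trans (hw y hy).symm

lemma exactIndex_univ_erase_nonneg {u : V} (hu : ∀ v ≠ u, 2 ≤ G.degree v) :
    0 ≤ exactIndex G (Finset.univ.erase u) := by
  rcases (Finset.univ.erase u).eq_empty_or_nonempty with hS | hS
  · simp [exactIndex, hS]
  obtain ⟨v, hv, hev⟩ := exists_exactIndex_eq hS (G := G)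
  have hout : degOut G (Finset.univ.erase u) v ≤ 1 := by
    have : (Finset.univ.erase u)ᶜ = {u} := by ext; simp
    rw [degOut, this]
    exact_mod_cast Finset.card_le_one.2 fun a ha b hb => by simp_all
  have := degIn_add_degOut (Finset.univ.erase u) v (G := G)
  have : (2 : ℤ) ≤ G.degree v := by exact_mod_cast hu v (Finset.ne_of_mem_erase hv)
  omega

end Alliance

section AlliancePoly

variable {V : Type*} [Fintype V] {G : SimpleGraph V}

lemma neg_card_lt_exactIndex {S : Finset V} (hS : S.Nonempty) :
    -(Fintype.card V : ℤ) < exactIndex G S := by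
  classical
  have : Nonempty V := hS.to_type
  have : G.maxDegree < Fintype.card V := G.maxDegree_lt_card_verts
  have := neg_maxDegree_le_exactIndex hS (G := G)
  omega

/-- Every exponent `|V| + exactIndex G S` is positive, so `toNat` loses nothing here; for
`k ≤ -|V|` both sides are `0`. -/
lemma coeff_alliancePoly (k : ℤ) :
    (alliancePoly G).coeff (Fintype.card V + k).toNat = allianceCount G k := by
  rw [alliancePoly, finsetSum_coeff]
  simp_rw [coeff_X_pow]
  rw [Finset.sum_boole, allianceCount]
  congr 2
  refine Finset.filter_congr fun S hS => ?_
  have := neg_card_lt_exactIndex (G := G) (mem_goodSets.1 hS).1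
  omega

lemma allianceCount_eq_of_alliancePoly_eq {W : Type*} [Fintype W] {H : SimpleGraph W}
    (h : alliancePoly G = alliancePoly H) (k : ℤ) :
    allianceCount G k = allianceCount H (k + Fintype.card V - Fintype.card W) := by
  have := coeff_alliancePoly (G := H) (k + Fintype.card V - Fintype.card W)
  rw [← h, show (Fintype.card W : ℤ) + (k + Fintype.card V - Fintype.card W) =
    Fintype.card V + k by ring, coeff_alliancePoly] at this
  exact_mod_cast this

end AlliancePoly

section CycleGraph

variable {n : ℕ} {k : ℤ}

lemma cycleGraph_isRegularOfDegree_two : (cycleGraph (n + 3)).IsRegularOfDegree 2 :=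
  fun _ => cycleGraph_degree_three_le

lemma cycleGraph_maxDegree : (cycleGraph (n + 3)).maxDegree = 2 :=
  cycleGraph_isRegularOfDegree_two.maxDegree_eq

lemma allianceCount_cycleGraph_neg_two : allianceCount (cycleGraph (n + 3)) (-2) = n + 3 := by
  simpa [cycleGraph_maxDegree, cycleGraph_degree_three_le] using
    allianceCount_neg_maxDegree (G := cycleGraph (n + 3))

lemma allianceCount_cycleGraph_two : allianceCount (cycleGraph (n + 3)) 2 = 1 := by
  have huniv := univ_mem_goodSets (cycleGraph_connected (n := n + 2))
  rw [allianceCount, Finset.card_eq_one]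
  refine ⟨Finset.univ,
    Finset.eq_singleton_iff_unique_mem.2 ⟨Finset.mem_filter.2 ⟨huniv, ?_⟩, ?_⟩⟩
  · obtain ⟨w, -, hw⟩ := exists_exactIndex_eq_degree (G := cycleGraph (n + 3))
      Finset.univ_nonempty fun _ _ w _ => Finset.mem_univ w
    rw [hw, cycleGraph_degree_three_le]
    rfl
  · rintro S hS
    rw [Finset.mem_filter] at hS
    exact eq_univ_of_maxDegree_le_exactIndex cycleGraph_preconnected (mem_goodSets.1 hS.1).1
      (by rw [cycleGraph_maxDegree, hS.2]; rfl)

lemma allianceCount_cycleGraph_eq_zero (hk : k ≠ -2) (hk₀ : k ≠ 0) (hk₂ : k ≠ 2) :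
    allianceCount (cycleGraph (n + 3)) k = 0 :=
  Finset.card_eq_zero.2 <| Finset.filter_eq_empty_iff.2 fun _ hS hSk => by
    rcases exactIndex_cases_of_isRegularOfDegree_two cycleGraph_isRegularOfDegree_two
      (mem_goodSets.1 hS).1 with h | h | h <;> rw [h] at hSk <;> omega

end CycleGraph

section AlliancePolyEqCycleGraph

variable {V : Type*} [Fintype V] {G : SimpleGraph V} {n : ℕ}

lemma allianceCount_eq_cycleGraph (h : alliancePoly G = alliancePoly (cycleGraph (n + 3)))
    (k : ℤ) :
    allianceCount G k = allianceCount (cycleGraph (n + 3)) (k + Fintype.card V - (n + 3)) := by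
  simpa using allianceCount_eq_of_alliancePoly_eq h k

lemma nonempty_of_alliancePoly_eq_cycleGraph
    (h : alliancePoly G = alliancePoly (cycleGraph (n + 3))) : Nonempty V := by
  have hpos := allianceCount_eq_cycleGraph h (-2 - Fintype.card V + (n + 3))
  rw [show -2 - (Fintype.card V : ℤ) + (n + 3) + Fintype.card V - (n + 3) = -2 by ring,
    allianceCount_cycleGraph_neg_two] at hpos
  obtain ⟨S, hS⟩ : ((goodSets G).filter _).Nonempty :=
    Finset.card_pos.1 (lt_of_lt_of_eq (by omega) hpos.symm)
  obtain ⟨v, -⟩ := (mem_goodSets.1 (Finset.mem_filter.1 hS).1).1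
  exact ⟨v⟩

variable [DecidableRel G.Adj]

/-- Both spectra start with the singletons of maximal degree, at `-Δ` and at `-2`. -/
lemma card_eq_of_alliancePoly_eq_cycleGraph
    (h : alliancePoly G = alliancePoly (cycleGraph (n + 3))) :
    (Fintype.card V : ℤ) = n + 1 + G.maxDegree := by
  have := nonempty_of_alliancePoly_eq_cycleGraph h
  have hG : allianceCount G (-2 - Fintype.card V + (n + 3)) ≠ 0 := by
    rw [allianceCount_eq_cycleGraph h, show -2 - (Fintype.card V : ℤ) + (n + 3) +
      Fintype.card V - (n + 3) = -2 by ring, allianceCount_cycleGraph_neg_two]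
    omega
  have hC : allianceCount (cycleGraph (n + 3))
      (-G.maxDegree + Fintype.card V - (n + 3)) ≠ 0 := by
    obtain ⟨v, hv⟩ := G.exists_maximal_degree_vertex
    rw [← allianceCount_eq_cycleGraph h, allianceCount_neg_maxDegree]
    exact Finset.card_ne_zero.2 ⟨v, by simp [hv]⟩
  have h₁ : -(G.maxDegree : ℤ) ≤ -2 - Fintype.card V + (n + 3) :=
    not_lt.1 fun hlt => hG (allianceCount_eq_zero_of_lt hlt)
  have h₂ : -2 ≤ -(G.maxDegree : ℤ) + Fintype.card V - (n + 3) :=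
    not_lt.1 fun hlt => hC (allianceCount_eq_zero_of_lt (by rwa [cycleGraph_maxDegree]))
  omega

lemma card_filter_degree_eq_maxDegree_of_alliancePoly_eq_cycleGraph
    (h : alliancePoly G = alliancePoly (cycleGraph (n + 3))) :
    (Finset.univ.filter (G.degree · = G.maxDegree)).card = n + 3 := by
  rw [← allianceCount_neg_maxDegree, allianceCount_eq_cycleGraph h,
    card_eq_of_alliancePoly_eq_cycleGraph h, show -(G.maxDegree : ℤ) + (n + 1 + G.maxDegree) -
      (n + 3) = -2 by ring, allianceCount_cycleGraph_neg_two]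

lemma exactIndex_cases_of_alliancePoly_eq_cycleGraph
    (h : alliancePoly G = alliancePoly (cycleGraph (n + 3))) {S : Finset V}
    (hS : S ∈ goodSets G) : exactIndex G S = -G.maxDegree ∨ exactIndex G S = 2 - G.maxDegree ∨
      exactIndex G S = 4 - G.maxDegree := by
  have hpos := allianceCount_pos hS
  rw [allianceCount_eq_cycleGraph h, card_eq_of_alliancePoly_eq_cycleGraph h] at hpos
  by_contra hne
  rw [allianceCount_cycleGraph_eq_zero (by omega) (by omega) (by omega)] at hpos
  exact hpos.false

lemma degree_cases_of_alliancePoly_eq_cycleGraph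
    (h : alliancePoly G = alliancePoly (cycleGraph (n + 3))) (v : V) :
    (G.degree v : ℤ) = G.maxDegree ∨ (G.degree v : ℤ) = G.maxDegree - 2 ∨
      (G.degree v : ℤ) = G.maxDegree - 4 := by
  have := exactIndex_cases_of_alliancePoly_eq_cycleGraph h (singleton_mem_goodSets v)
  rw [exactIndex_singleton] at this
  omega

lemma allianceCount_four_sub_maxDegree_of_alliancePoly_eq_cycleGraph
    (h : alliancePoly G = alliancePoly (cycleGraph (n + 3))) :
    allianceCount G (4 - G.maxDegree) = 1 := by
  rw [allianceCount_eq_cycleGraph h, card_eq_of_alliancePoly_eq_cycleGraph h,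
    show 4 - (G.maxDegree : ℤ) + (n + 1 + G.maxDegree) - (n + 3) = 2 by ring,
    allianceCount_cycleGraph_two]

lemma two_le_maxDegree_of_alliancePoly_eq_cycleGraph
    (h : alliancePoly G = alliancePoly (cycleGraph (n + 3))) : 2 ≤ G.maxDegree := by
  have hle := Finset.card_filter_le (Finset.univ : Finset V) (G.degree · = G.maxDegree)
  rw [card_filter_degree_eq_maxDegree_of_alliancePoly_eq_cycleGraph h, Finset.card_univ] at hle
  have := card_eq_of_alliancePoly_eq_cycleGraph h
  omega

/-- The component of a vertex of maximal degree has index `deg w ≥ Δ - 4` for one of its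
vertices `w`, and at most `4 - Δ`; at `Δ = 4` that `w` would be isolated. -/
lemma maxDegree_le_three_of_alliancePoly_eq_cycleGraph
    (h : alliancePoly G = alliancePoly (cycleGraph (n + 3))) : G.maxDegree ≤ 3 := by
  have := nonempty_of_alliancePoly_eq_cycleGraph h
  obtain ⟨v, hv⟩ := G.exists_maximal_degree_vertex
  let K := G.connectedComponentMk v
  obtain ⟨w, hwK, hw⟩ := K.exists_exactIndex_supp_eq_degree
  have hK := exactIndex_cases_of_alliancePoly_eq_cycleGraph h K.supp_toFinset_mem_goodSets
  have hdeg := degree_cases_of_alliancePoly_eq_cycleGraph h w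
  by_contra! hΔ
  have hw₀ : G.degree w = 0 := by omega
  have hin : degIn G K.supp.toFinset w = 0 := by
    have := degIn_add_degOut K.supp.toFinset w (G := G)
    have := degIn_nonneg (G := G) (S := K.supp.toFinset) (v := w)
    have := degOut_nonneg (G := G) (S := K.supp.toFinset) (v := w)
    omega
  have hK₁ := eq_singleton_of_degIn_eq_zero K.supp_toFinset_mem_goodSets
    (Set.mem_toFinset.2 hwK) hin
  obtain rfl : v = w := by
    simpa using hK₁.subset (Set.mem_toFinset.2 ConnectedComponent.connectedComponentMk_mem)
  omega

/-- At `Δ = 3` there is a unique leaf `u`, every component has index `1`, and both the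
component of `u` and `V ∖ {u}` are connected sets of index `1 = 4 - Δ`. -/
lemma maxDegree_ne_three_of_alliancePoly_eq_cycleGraph
    (h : alliancePoly G = alliancePoly (cycleGraph (n + 3))) : G.maxDegree ≠ 3 := by
  intro hΔ
  have hcard := card_eq_of_alliancePoly_eq_cycleGraph h
  have hmax := card_filter_degree_eq_maxDegree_of_alliancePoly_eq_cycleGraph h
  have hone := allianceCount_four_sub_maxDegree_of_alliancePoly_eq_cycleGraph h
  rw [hΔ] at hcard hmax hone
  obtain ⟨u, hu⟩ : ∃ u, Finset.univ.filter (¬G.degree · = 3) = {u} := by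
    rw [← Finset.card_eq_one]
    have := Finset.card_filter_add_card_filter_not (s := Finset.univ) (G.degree · = 3)
    rw [Finset.card_univ] at this
    omega
  have hleaf : ∀ v ≠ u, G.degree v = 3 := fun v hv => by
    by_contra hv'
    exact hv (Finset.mem_singleton.1 (hu ▸ Finset.mem_filter.2 ⟨Finset.mem_univ v, hv'⟩))
  have hu₁ : G.degree u = 1 := by
    have := (Finset.mem_filter.1 (hu ▸ Finset.mem_singleton_self u)).2
    have := degree_cases_of_alliancePoly_eq_cycleGraph h u
    omega
  have hcomp (K : G.ConnectedComponent) : exactIndex G K.supp.toFinset = 4 - 3 := by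
    obtain ⟨w, -, hw⟩ := K.exists_exactIndex_supp_eq_degree
    have := exactIndex_cases_of_alliancePoly_eq_cycleGraph h K.supp_toFinset_mem_goodSets
    omega
  have hne : (Finset.univ.erase u).Nonempty := Finset.card_pos.1 <| by
    rw [Finset.card_erase_of_mem (Finset.mem_univ u), Finset.card_univ]
    omega
  have hS := univ_erase_mem_goodSets (preconnected_of_allianceCount_le_one hone.le hcomp) hu₁ hne
  have hSidx : exactIndex G (Finset.univ.erase u) = 4 - 3 := by
    have := exactIndex_univ_erase_nonneg (G := G) fun v hv => by rw [hleaf v hv]; norm_num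
    have := exactIndex_cases_of_alliancePoly_eq_cycleGraph h hS
    omega
  have := eq_of_allianceCount_le_one hone.le hS
    (G.connectedComponentMk u).supp_toFinset_mem_goodSets hSidx (hcomp _)
  simpa using this.ge (Set.mem_toFinset.2 ConnectedComponent.connectedComponentMk_mem)

lemma isRegularOfDegree_two_of_alliancePoly_eq_cycleGraph
    (h : alliancePoly G = alliancePoly (cycleGraph (n + 3))) (hΔ : G.maxDegree = 2) :
    G.IsRegularOfDegree 2 := by
  have hall : Finset.univ.filter (G.degree · = G.maxDegree) = Finset.univ := by
    apply Finset.eq_univ_of_card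
    have := card_eq_of_alliancePoly_eq_cycleGraph h
    rw [card_filter_degree_eq_maxDegree_of_alliancePoly_eq_cycleGraph h]
    omega
  intro v
  simpa [hΔ] using Finset.eq_univ_iff_forall.1 hall v

lemma connected_of_alliancePoly_eq_cycleGraph
    (h : alliancePoly G = alliancePoly (cycleGraph (n + 3))) (hΔ : G.maxDegree = 2) :
    G.Connected := by
  have := nonempty_of_alliancePoly_eq_cycleGraph h
  refine ⟨preconnected_of_allianceCount_le_one
    (allianceCount_four_sub_maxDegree_of_alliancePoly_eq_cycleGraph h).le fun K => ?_⟩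
  obtain ⟨w, -, hw⟩ := K.exists_exactIndex_supp_eq_degree
  rw [hw, (isRegularOfDegree_two_of_alliancePoly_eq_cycleGraph h hΔ).degree_eq, hΔ]
  rfl

end AlliancePolyEqCycleGraph

/-- cycle graphs are characterized by their alliance polynomials. -/
theorem eq_cycleGraph_of_alliancePoly {V : Type*} [Fintype V] (G : SimpleGraph V)
    (t : ℕ) (ht : 3 ≤ t)
    (h : alliancePoly G = alliancePoly (SimpleGraph.cycleGraph t)) :
    Nonempty (G ≃g SimpleGraph.cycleGraph t) := by
  obtain ⟨n, rfl⟩ : ∃ n, t = n + 3 := ⟨t - 3, by omega⟩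
  have := two_le_maxDegree_of_alliancePoly_eq_cycleGraph h
  have := maxDegree_le_three_of_alliancePoly_eq_cycleGraph h
  have := maxDegree_ne_three_of_alliancePoly_eq_cycleGraph h
  have hΔ : G.maxDegree = 2 := by omega
  have hcard : Fintype.card V = n + 3 := by
    have := card_eq_of_alliancePoly_eq_cycleGraph h
    omega
  rw [← hcard]
  exact nonempty_iso_cycleGraph_of_isRegularOfDegree_two
    (connected_of_alliancePoly_eq_cycleGraph h hΔ)
    (isRegularOfDegree_two_of_alliancePoly_eq_cycleGraph h hΔ)
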